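/- arXiv:2107.00117 — 8 statements merged into one kernel-verified Lean document; each statement's English description precedes it below -/
import Mathlib

section
/- Let K ⊂ E₂ be a closed convex cone with K ≠ E₂ and let F : D ⊂ E₁ → E₂ with D nonempty. If the scalarization ⟨u, F⟩ is lower semicontinuous for every u ∈ −K° \ {0}, then the K-epigraph of F is a closed subset of E₁ × E₂. -/
open scoped RealInnerProductSpace Classical

lemma aux_sep {E₂ : Type*} [NormedAddCommGroup E₂] [InnerProductSpace ℝ E₂]
    [FiniteDimensional ℝ E₂]
    (K : Set E₂) (hne : K.Nonempty) (hKc : IsClosed K) (hK : Convex ℝ K)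
    (hcone : ∀ c : ℝ, 0 ≤ c → ∀ x ∈ K, c • x ∈ K)
    {b : E₂} (hb : b ∉ K) :
    ∃ u : E₂, u ≠ 0 ∧ (∀ v ∈ K, 0 ≤ ⟪u, v⟫) ∧ ⟪u, b⟫ < 0 := by
  set C : ProperCone ℝ E₂ :=
    { carrier := K
      zero_mem' := by
        obtain ⟨x, hx⟩ := hne
        simpa using hcone 0 le_rfl x hx
      smul_mem' := fun c x hx => hcone c c.2 x hx
      isClosed' := hKc
      add_mem' := fun {x y} hx hy => by
        have h2 := hK hx hy (by norm_num : (0:ℝ) ≤ 1/2) (by norm_num : (0:ℝ) ≤ 1/2)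
          (by norm_num)
        have := hcone 2 (by norm_num) _ h2
        simpa [smul_smul, smul_add] using this }
  obtain ⟨y, hy1, hy2⟩ :=
    C.hyperplane_separation' (x₀ := b) (by exact hb)
  refine ⟨y, ?_, fun v hv => by simpa [real_inner_comm] using hy1 v (by exact hv), by rwa [real_inner_comm]⟩
  rintro rfl
  simp at hy2

/-- If `K ≠ E₂` is a closed convex cone and all scalarizations `⟪u, F⟫` (extended by `+∞`
off `D`) with `u ∈ -K° \ {0}` are lower semicontinuous, then the `K`-epigraph of `F` is
closed. -/
theorem kEpigraph_isClosed_of_lsc_scalarizations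
    {E₁ E₂ : Type*} [NormedAddCommGroup E₁] [InnerProductSpace ℝ E₁] [FiniteDimensional ℝ E₁]
    [NormedAddCommGroup E₂] [InnerProductSpace ℝ E₂] [FiniteDimensional ℝ E₂]
    (K : Set E₂) (hne : K.Nonempty) (hKc : IsClosed K) (hK : Convex ℝ K)
    (hcone : ∀ c : ℝ, 0 ≤ c → ∀ x ∈ K, c • x ∈ K)
    (hKne : K ≠ Set.univ)
    (D : Set E₁) (hD : D.Nonempty) (F : E₁ → E₂)
    (hlsc : ∀ u : E₂, u ≠ 0 → (∀ v ∈ K, 0 ≤ ⟪u, v⟫) →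
      LowerSemicontinuous (fun x => if x ∈ D then ((⟪u, F x⟫ : ℝ) : EReal) else ⊤)) :
    IsClosed {p : E₁ × E₂ | p.1 ∈ D ∧ p.2 - F p.1 ∈ K} := by
  -- the set of admissible dual vectors
  set U : Set E₂ := {u | u ≠ 0 ∧ ∀ v ∈ K, 0 ≤ ⟪u, v⟫} with hU
  obtain ⟨b, hb⟩ : ∃ b, b ∉ K := by
    by_contra h
    push_neg at h
    exact hKne (Set.eq_univ_of_forall h)
  obtain ⟨u₀, hu₀, hu₀K, _⟩ := aux_sep K hne hKc hK hcone hb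
  have hu₀U : u₀ ∈ U := ⟨hu₀, hu₀K⟩
  -- the scalarization function
  set f : E₂ → E₁ × E₂ → EReal := fun u p =>
    if p.1 ∈ D then ((⟪u, F p.1⟫ : ℝ) : EReal) else ⊤ with hf
  -- the epigraph as an intersection
  have key : {p : E₁ × E₂ | p.1 ∈ D ∧ p.2 - F p.1 ∈ K}
      = ⋂ u ∈ U, {p : E₁ × E₂ | f u p ≤ ((⟪u, p.2⟫ : ℝ) : EReal)} := by
    ext p
    simp only [Set.mem_setOf_eq, Set.mem_iInter]
    constructor
    · rintro ⟨hpD, hpK⟩ u hu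
      have h0 := hu.2 _ hpK
      rw [inner_sub_right] at h0
      simp only [hf, if_pos hpD]
      exact_mod_cast (by linarith : (⟪u, F p.1⟫ : ℝ) ≤ ⟪u, p.2⟫)
    · intro h
      have hpD : p.1 ∈ D := by
        by_contra hpD
        have := h u₀ hu₀U
        simp only [hf, if_neg hpD] at this
        exact (EReal.coe_lt_top _).not_ge (le_of_eq (top_le_iff.mp this).symm)
      refine ⟨hpD, ?_⟩
      by_contra hc
      obtain ⟨u, hu, huK, hub⟩ := aux_sep K hne hKc hK hcone hc
      have := h u ⟨hu, huK⟩
      simp only [hf, if_pos hpD] at this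
      rw [EReal.coe_le_coe_iff] at this
      rw [inner_sub_right] at hub
      linarith
  rw [key]
  refine isClosed_biInter fun u hu => ?_
  -- each piece is closed
  have hl : LowerSemicontinuous (f u) := by
    have := hlsc u hu.1 hu.2
    exact this.comp continuous_fst
  rw [← isOpen_compl_iff]
  rw [isOpen_iff_mem_nhds]
  intro p hp
  simp only [Set.mem_compl_iff, Set.mem_setOf_eq, not_le] at hp
  obtain ⟨t, ht1, ht2⟩ := exists_between hp
  obtain ⟨t', rfl⟩ : ∃ t' : ℝ, (t' : EReal) = t := by
    refine ⟨t.toReal, ?_⟩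
    have hbot : t ≠ ⊥ := fun h => by simp [h] at ht1
    have htop : t ≠ ⊤ := fun h => by simp [h] at ht2
    exact EReal.coe_toReal htop hbot
  have h1 : ∀ᶠ q : E₁ × E₂ in nhds p, (t' : EReal) < f u q := hl p _ ht2
  have h2 : ∀ᶠ q : E₁ × E₂ in nhds p, (⟪u, q.2⟫ : ℝ) < t' := by
    have hc : Continuous fun q : E₁ × E₂ => (⟪u, q.2⟫ : ℝ) :=
      (continuous_const.inner continuous_id).comp continuous_snd
    have : (⟪u, p.2⟫ : ℝ) < t' := by exact_mod_cast ht1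
    exact (hc.tendsto p).eventually_lt tendsto_const_nhds this
  filter_upwards [h1, h2] with q hq1 hq2
  simp only [Set.mem_compl_iff, Set.mem_setOf_eq, not_le]
  exact lt_trans (by exact_mod_cast hq2) hq1
end

section
/- Let U ⊂ E₂ be a nontrivial linear subspace, D ⊂ E₁ convex, F : D → E₂. Then F is U-convex if and only if there exist an affine map G : aff D → E₂ and a function H : aff D → U with F = G|_D + H|_D. -/
open Set

section aux
variable {E₁ E₂ : Type*} [NormedAddCommGroup E₁] [InnerProductSpace ℝ E₁]
  [NormedAddCommGroup E₂] [InnerProductSpace ℝ E₂]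
  {D : Set E₁} {f : E₁ → E₂}

/-- affinity of `f` on `D` -/
def AffOn (D : Set E₁) (f : E₁ → E₂) : Prop :=
  ∀ x ∈ D, ∀ y ∈ D, ∀ t ∈ Set.Ioo (0:ℝ) 1,
    f (t • x + (1 - t) • y) = t • f x + (1 - t) • f y

lemma addRep (hDconv : Convex ℝ D) (hf : AffOn D f)
    {c c' : ℝ} (hc : 0 < c) (hc' : 0 < c') {a b a' b' : E₁}
    (ha : a ∈ D) (hb : b ∈ D) (ha' : a' ∈ D) (hb' : b' ∈ D) :
    ∃ p q, p ∈ D ∧ q ∈ D ∧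
      c • (a - b) + c' • (a' - b') = (c + c') • (p - q) ∧
      c • (f a - f b) + c' • (f a' - f b') = (c + c') • (f p - f q) := by
  set s := c + c' with hs
  have hspos : 0 < s := by positivity
  set t := c / s with ht
  have ht0 : 0 < t := by positivity
  have ht1 : t < 1 := by rw [ht, div_lt_one hspos]; linarith
  have hpD : t • a + (1 - t) • a' ∈ D := hDconv ha ha' ht0.le (by linarith) (by ring)
  have hqD : t • b + (1 - t) • b' ∈ D := hDconv hb hb' ht0.le (by linarith) (by ring)
  have h2 : s * t = c := by rw [ht, mul_div_cancel₀ _ hspos.ne']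
  have h3 : s * (1 - t) = c' := by rw [ht, mul_sub, mul_div_cancel₀ _ hspos.ne']; linarith
  have hfp : f (t • a + (1 - t) • a') = t • f a + (1 - t) • f a' :=
    hf a ha a' ha' t ⟨ht0, ht1⟩
  have hfq : f (t • b + (1 - t) • b') = t • f b + (1 - t) • f b' :=
    hf b hb b' hb' t ⟨ht0, ht1⟩
  refine ⟨t • a + (1 - t) • a', t • b + (1 - t) • b', hpD, hqD, ?_, ?_⟩
  · match_scalars <;> (rw [hs] at h2 h3 ⊢; linarith)
  · rw [hfp, hfq]
    match_scalars <;> (rw [hs] at h2 h3 ⊢; linarith)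

lemma eqRep (hDconv : Convex ℝ D) (hf : AffOn D f)
    {c c' : ℝ} (hc : 0 < c) (hc' : 0 < c') {a b a' b' : E₁}
    (ha : a ∈ D) (hb : b ∈ D) (ha' : a' ∈ D) (hb' : b' ∈ D)
    (hrep : c • (a - b) = c' • (a' - b')) :
    c • (f a - f b) = c' • (f a' - f b') := by
  obtain ⟨p, q, hp, hq, h1, h2⟩ := addRep hDconv hf hc hc' ha hb hb' ha'
  have hz : c • (a - b) + c' • (b' - a') = 0 := by rw [hrep]; module
  rw [hz] at h1
  have hne : (c + c' : ℝ) ≠ 0 := by positivity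
  have hpq : p - q = (0 : E₁) := by
    rcases smul_eq_zero.mp h1.symm with h | h
    · exact absurd h hne
    · exact h
  have hfeq : f p = f q := by rw [sub_eq_zero.mp hpq]
  have hzero : c • (f a - f b) + c' • (f b' - f a') = 0 := by
    rw [h2, hfeq]; simp
  have h5 : c • (f a - f b) - c' • (f a' - f b') = 0 := by
    rw [← hzero]; module
  exact sub_eq_zero.mp h5

/-- the cone generated by differences of points of `D` -/
def coneOf (D : Set E₁) : Set E₁ :=
  {v | ∃ (c : ℝ) (a b : E₁), 0 < c ∧ a ∈ D ∧ b ∈ D ∧ v = c • (a - b)}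

lemma coneOf_add (hDconv : Convex ℝ D) {u w : E₁}
    (hu : u ∈ coneOf D) (hw : w ∈ coneOf D) : u + w ∈ coneOf D := by
  obtain ⟨c, a, b, hc, ha, hb, rfl⟩ := hu
  obtain ⟨c', a', b', hc', ha', hb', rfl⟩ := hw
  obtain ⟨p, q, hp, hq, h1, -⟩ :=
    addRep (f := fun _ => (0 : E₁)) hDconv (fun x _ y _ t _ => by simp) hc hc' ha hb ha' hb'
  exact ⟨c + c', p, q, by positivity, hp, hq, h1⟩

lemma coneOf_smul {x₀ : E₁} (hx₀ : x₀ ∈ D) (r : ℝ) {u : E₁}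
    (hu : u ∈ coneOf D) : r • u ∈ coneOf D := by
  obtain ⟨c, a, b, hc, ha, hb, rfl⟩ := hu
  rcases lt_trichotomy r 0 with h | h | h
  · exact ⟨(-r) * c, b, a, mul_pos (neg_pos.mpr h) hc, hb, ha, by match_scalars <;> ring⟩
  · exact ⟨1, x₀, x₀, one_pos, hx₀, hx₀, by simp [h]⟩
  · exact ⟨r * c, a, b, by positivity, ha, hb, by rw [smul_smul]⟩

lemma sub_mem_coneOf (hDconv : Convex ℝ D) {x₀ x : E₁} (hx₀ : x₀ ∈ D)
    (hx : x ∈ affineSpan ℝ D) : x - x₀ ∈ coneOf D := by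
  have h1 : x -ᵥ x₀ ∈ vectorSpan ℝ D := by
    rw [← direction_affineSpan ℝ D]
    exact AffineSubspace.vsub_mem_direction hx (subset_affineSpan ℝ D hx₀)
  let V : Submodule ℝ E₁ :=
    { carrier := coneOf D
      add_mem' := fun hu hw => coneOf_add hDconv hu hw
      zero_mem' := ⟨1, x₀, x₀, one_pos, hx₀, hx₀, by simp⟩
      smul_mem' := fun r u hu => coneOf_smul hx₀ r hu }
  have hle : vectorSpan ℝ D ≤ V := by
    rw [vectorSpan_def]
    refine Submodule.span_le.mpr ?_
    rintro v ⟨a, ha, b, hb, rfl⟩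
    exact ⟨1, a, b, one_pos, ha, hb, by simp [vsub_eq_sub]⟩
  exact hle h1

open Classical in
/-- the linearization of `f` on the cone, via choice -/
noncomputable def coneSlope (D : Set E₁) (f : E₁ → E₂) : E₁ → E₂ := fun v =>
  if h : ∃ e : E₂, ∃ (c : ℝ) (a b : E₁), 0 < c ∧ a ∈ D ∧ b ∈ D ∧ v = c • (a - b) ∧ e = c • (f a - f b)
  then h.choose else 0

lemma coneSlope_eq (hDconv : Convex ℝ D) (hf : AffOn D f)
    {v : E₁} {c : ℝ} {a b : E₁} (hc : 0 < c) (ha : a ∈ D) (hb : b ∈ D)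
    (hv : v = c • (a - b)) : coneSlope D f v = c • (f a - f b) := by
  have hex : ∃ e : E₂, ∃ (c : ℝ) (a b : E₁), 0 < c ∧ a ∈ D ∧ b ∈ D ∧ v = c • (a - b) ∧
      e = c • (f a - f b) := ⟨c • (f a - f b), c, a, b, hc, ha, hb, hv, rfl⟩
  rw [coneSlope, dif_pos hex]
  obtain ⟨c', a', b', hc', ha', hb', hv', he'⟩ := hex.choose_spec
  rw [he']
  exact eqRep hDconv hf hc' hc ha' hb' ha hb (by rw [← hv', hv])

lemma coneSlope_add (hDconv : Convex ℝ D) (hf : AffOn D f) {u w : E₁}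
    (hu : u ∈ coneOf D) (hw : w ∈ coneOf D) :
    coneSlope D f (u + w) = coneSlope D f u + coneSlope D f w := by
  obtain ⟨c, a, b, hc, ha, hb, rfl⟩ := hu
  obtain ⟨c', a', b', hc', ha', hb', rfl⟩ := hw
  obtain ⟨p, q, hp, hq, h1, h2⟩ := addRep hDconv hf hc hc' ha hb ha' hb'
  rw [coneSlope_eq hDconv hf (by positivity : (0:ℝ) < c + c') hp hq h1,
    coneSlope_eq hDconv hf hc ha hb rfl, coneSlope_eq hDconv hf hc' ha' hb' rfl, ← h2]

lemma coneSlope_smul (hDconv : Convex ℝ D) (hf : AffOn D f) {r : ℝ} (hr : 0 < r)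
    {u : E₁} (hu : u ∈ coneOf D) :
    coneSlope D f (r • u) = r • coneSlope D f u := by
  obtain ⟨c, a, b, hc, ha, hb, rfl⟩ := hu
  rw [coneSlope_eq hDconv hf (mul_pos hr hc) ha hb (smul_smul r c _),
    coneSlope_eq hDconv hf hc ha hb rfl, smul_smul]

end aux

/-- `F : D → E₂` (with `D` convex) is `U`-convex for a nontrivial subspace `U` iff
`F = G|_D + H|_D` with `G` affine on `aff D` and `H` taking values in `U`. -/
theorem uConvex_iff_affine_plus_subspace_valued
    {E₁ E₂ : Type*} [NormedAddCommGroup E₁] [InnerProductSpace ℝ E₁] [FiniteDimensional ℝ E₁]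
    [NormedAddCommGroup E₂] [InnerProductSpace ℝ E₂] [FiniteDimensional ℝ E₂]
    (U : Submodule ℝ E₂) (hU : U ≠ ⊥)
    (D : Set E₁) (hD : D.Nonempty) (hDconv : Convex ℝ D) (F : E₁ → E₂) :
    (∀ x ∈ D, ∀ y ∈ D, ∀ t ∈ Set.Ioo (0 : ℝ) 1,
        t • F x + (1 - t) • F y - F (t • x + (1 - t) • y) ∈ U)
      ↔ ∃ (G : E₁ → E₂) (H : E₁ → E₂),
          (∀ x ∈ affineSpan ℝ D, ∀ y ∈ affineSpan ℝ D, ∀ t ∈ Set.Ioo (0 : ℝ) 1,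
              G (t • x + (1 - t) • y) = t • G x + (1 - t) • G y) ∧
          (∀ x ∈ affineSpan ℝ D, H x ∈ U) ∧
          ∀ x ∈ D, F x = G x + H x := by
  classical
  constructor
  · intro hconv
    obtain ⟨x₀, hx₀⟩ := hD
    set f : E₁ → E₂ := fun x => (Submodule.orthogonalProjection Uᗮ (F x) : E₂) with hfdef
    have hfAff : AffOn D f := by
      intro x hx y hy t ht
      have hmem := hconv x hx y hy t ht
      have hz : ((Submodule.orthogonalProjection Uᗮ
          (t • F x + (1 - t) • F y - F (t • x + (1 - t) • y)) : Uᗮ) : E₂) = 0 := by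
        rw [Submodule.orthogonalProjectionOnto_apply_of_mem_orthogonal
          (Submodule.le_orthogonal_orthogonal U hmem)]
        simp
      rw [map_sub, map_add, map_smul, map_smul] at hz
      have hz' : t • f x + (1 - t) • f y - f (t • x + (1 - t) • y) = 0 := by
        simpa [hfdef] using hz
      exact (sub_eq_zero.mp hz').symm
    set S : E₁ → E₂ := coneSlope D f with hSdef
    set G : E₁ → E₂ := fun x => f x₀ + S (x - x₀) with hGdef
    have hGD : ∀ x ∈ D, G x = f x := by
      intro x hx
      show f x₀ + S (x - x₀) = f x
      rw [hSdef, coneSlope_eq hDconv hfAff one_pos hx hx₀ (by simp)]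
      module
    refine ⟨G, fun x => if x ∈ D then F x - G x else 0, ?_, ?_, ?_⟩
    · intro x hx y hy t ht
      have hu := sub_mem_coneOf hDconv hx₀ hx
      have hw := sub_mem_coneOf hDconv hx₀ hy
      have e1 : t • x + (1 - t) • y - x₀ = t • (x - x₀) + (1 - t) • (y - x₀) := by module
      show f x₀ + S (t • x + (1 - t) • y - x₀)
          = t • (f x₀ + S (x - x₀)) + (1 - t) • (f x₀ + S (y - x₀))
      rw [e1, hSdef, coneSlope_add hDconv hfAff
          (coneOf_smul hx₀ t hu) (coneOf_smul hx₀ (1 - t) hw),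
        coneSlope_smul hDconv hfAff ht.1 hu,
        coneSlope_smul hDconv hfAff (by linarith [ht.2] : (0:ℝ) < 1 - t) hw]
      module
    · intro x hx
      by_cases hxD : x ∈ D
      · simp only [if_pos hxD]
        rw [hGD x hxD]
        have hsub : F x - (Submodule.orthogonalProjection Uᗮ (F x) : E₂) ∈ Uᗮᗮ :=
          Submodule.sub_starProjection_mem_orthogonal (K := Uᗮ) (F x)
        rw [Submodule.orthogonal_orthogonal] at hsub
        exact hsub
      · simp only [if_neg hxD]
        exact Submodule.zero_mem U
    · intro x hx
      simp only [if_pos hx]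
      abel
  · rintro ⟨G, H, hGaff, hHU, hFGH⟩ x hx y hy t ht
    have hxs := subset_affineSpan ℝ D hx
    have hys := subset_affineSpan ℝ D hy
    have hcomb : t • x + (1 - t) • y ∈ D :=
      hDconv hx hy ht.1.le (by linarith [ht.2]) (by ring)
    have hcombs := subset_affineSpan ℝ D hcomb
    have e : t • F x + (1 - t) • F y - F (t • x + (1 - t) • y)
        = t • H x + (1 - t) • H y - H (t • x + (1 - t) • y) := by
      rw [hFGH x hx, hFGH y hy, hFGH _ hcomb, hGaff x hxs y hys t ht]
      module
    rw [e]
    exact Submodule.sub_mem _ (Submodule.add_mem _ (Submodule.smul_mem _ _ (hHU x hxs))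
      (Submodule.smul_mem _ _ (hHU y hys))) (hHU _ hcombs)
end

section
/- Let K ⊂ E₂ be a closed convex cone and F : E₁ → E₂ ∪ {+∞} be proper, K-closed and K-convex. Then the K-epigraph of F equals the closure of (closed convex hull of gph F) + {0} × K. -/
open scoped Pointwise

/-- For a proper, `K`-closed, `K`-convex `F`, the `K`-epigraph of `F` equals the closure
of `(closed convex hull of gph F) + {0} × K`. -/
theorem kEpigraph_eq_closure_closedConvexHull_add
    {E₁ E₂ : Type*} [NormedAddCommGroup E₁] [InnerProductSpace ℝ E₁] [FiniteDimensional ℝ E₁]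
    [NormedAddCommGroup E₂] [InnerProductSpace ℝ E₂] [FiniteDimensional ℝ E₂]
    (K : Set E₂) (hne : K.Nonempty) (hKc : IsClosed K) (hK : Convex ℝ K)
    (hcone : ∀ c : ℝ, 0 ≤ c → ∀ x ∈ K, c • x ∈ K)
    (D : Set E₁) (hD : D.Nonempty) (F : E₁ → E₂)
    (hclosed : IsClosed {p : E₁ × E₂ | p.1 ∈ D ∧ p.2 - F p.1 ∈ K})
    (hconv : Convex ℝ {p : E₁ × E₂ | p.1 ∈ D ∧ p.2 - F p.1 ∈ K}) :
    {p : E₁ × E₂ | p.1 ∈ D ∧ p.2 - F p.1 ∈ K}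
      = closure (closure (convexHull ℝ {p : E₁ × E₂ | p.1 ∈ D ∧ p.2 = F p.1})
          + ({0} : Set E₁) ×ˢ K) := by
  set S : Set (E₁ × E₂) := {p : E₁ × E₂ | p.1 ∈ D ∧ p.2 - F p.1 ∈ K} with hS
  set G : Set (E₁ × E₂) := {p : E₁ × E₂ | p.1 ∈ D ∧ p.2 = F p.1} with hG
  -- 0 ∈ K and K closed under addition
  obtain ⟨k₀, hk₀⟩ := hne
  have hzero : (0 : E₂) ∈ K := by simpa using hcone 0 le_rfl k₀ hk₀
  have hadd : ∀ a ∈ K, ∀ b ∈ K, a + b ∈ K := by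
    intro a ha b hb
    have hmid : (1/2 : ℝ) • a + (1/2 : ℝ) • b ∈ K :=
      hK ha hb (by norm_num) (by norm_num) (by norm_num)
    have := hcone 2 (by norm_num) _ hmid
    have h2 : (2 : ℝ) • ((1/2 : ℝ) • a + (1/2 : ℝ) • b) = a + b := by
      rw [smul_add, smul_smul, smul_smul]; norm_num
    rwa [h2] at this
  -- G ⊆ S
  have hGS : G ⊆ S := by
    rintro ⟨x, y⟩ ⟨hx, hy⟩
    simp only at hx hy
    exact ⟨hx, by rw [hy]; simpa using hzero⟩
  have hhullS : closure (convexHull ℝ G) ⊆ S :=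
    hclosed.closure_subset_iff.mpr (convexHull_min hGS hconv)
  apply Set.Subset.antisymm
  · intro p hp
    apply subset_closure
    refine ⟨(p.1, F p.1), ?_, (0, p.2 - F p.1), ?_, ?_⟩
    · exact subset_closure (subset_convexHull ℝ G ⟨hp.1, rfl⟩)
    · exact ⟨rfl, hp.2⟩
    · simp
  · rw [← hclosed.closure_eq]
    apply closure_mono
    rintro p ⟨a, ha, b, hb, rfl⟩
    have haS := hhullS ha
    obtain ⟨hb1, hb2⟩ := hb
    simp only [Set.mem_singleton_iff] at hb1
    refine ⟨by simpa [hb1] using haS.1, ?_⟩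
    have : a.2 + b.2 - F (a.1 + b.1) = (a.2 - F a.1) + b.2 := by
      rw [hb1]; abel
    simpa [Prod.fst_add, Prod.snd_add, this] using hadd _ haS.2 _ hb2
end

section
/- Let K ⊂ E₂ be a closed convex cone and F : E₁ → E₂ ∪ {+∞} proper, K-convex and K-closed. Then the K-epigraph of F equals the closed convex hull of gph F if and only if {0} × K is contained in the horizon (recession) cone of the closed convex hull of gph F. -/
/-- The horizon cone of a set `C`: limits of `t k • x k` with `t k > 0`, `t k → 0`,
`x k ∈ C`. -/
def horizonCone {E : Type*} [NormedAddCommGroup E] [Module ℝ E] (C : Set E) : Set E :=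
  {u | ∃ (t : ℕ → ℝ) (x : ℕ → E), (∀ k, 0 < t k) ∧
    Filter.Tendsto t Filter.atTop (nhds 0) ∧ (∀ k, x k ∈ C) ∧
    Filter.Tendsto (fun k => t k • x k) Filter.atTop (nhds u)}

lemma add_horizonCone_mem {E : Type*} [NormedAddCommGroup E] [NormedSpace ℝ E]
    {C : Set E} (hCc : IsClosed C) (hCv : Convex ℝ C) {c u : E}
    (hc : c ∈ C) (hu : u ∈ horizonCone C) : c + u ∈ C := by
  obtain ⟨t, x, htpos, ht0, hx, hlim⟩ := hu
  have hlt : ∀ᶠ n in Filter.atTop, t n < 1 := ht0.eventually_lt_const one_pos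
  have hmem : ∀ᶠ n in Filter.atTop, (1 - t n) • c + t n • x n ∈ C := by
    filter_upwards [hlt] with n hn
    exact hCv hc (hx n) (by linarith) (htpos n).le (by ring)
  have hlim' : Filter.Tendsto (fun n => (1 - t n) • c + t n • x n)
      Filter.atTop (nhds (c + u)) := by
    have h1 : Filter.Tendsto (fun n => (1 - t n) • c) Filter.atTop
        (nhds (((1:ℝ) - 0) • c)) :=
      (Filter.Tendsto.const_sub 1 ht0).smul_const c
    simpa using h1.add hlim
  exact hCc.mem_of_tendsto hlim' hmem

/-- For a proper, `K`-convex, `K`-closed `F`, the `K`-epigraph equals the closed convex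
hull of `gph F` iff `{0} × K` is contained in the horizon cone of that closed convex
hull. -/
theorem kEpigraph_eq_closedConvexHull_iff_horizon
    {E₁ E₂ : Type*} [NormedAddCommGroup E₁] [InnerProductSpace ℝ E₁] [FiniteDimensional ℝ E₁]
    [NormedAddCommGroup E₂] [InnerProductSpace ℝ E₂] [FiniteDimensional ℝ E₂]
    (K : Set E₂) (hne : K.Nonempty) (hKc : IsClosed K) (hK : Convex ℝ K)
    (hcone : ∀ c : ℝ, 0 ≤ c → ∀ x ∈ K, c • x ∈ K)
    (D : Set E₁) (hD : D.Nonempty) (F : E₁ → E₂)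
    (hclosed : IsClosed {p : E₁ × E₂ | p.1 ∈ D ∧ p.2 - F p.1 ∈ K})
    (hconv : Convex ℝ {p : E₁ × E₂ | p.1 ∈ D ∧ p.2 - F p.1 ∈ K}) :
    {p : E₁ × E₂ | p.1 ∈ D ∧ p.2 - F p.1 ∈ K}
        = closure (convexHull ℝ {p : E₁ × E₂ | p.1 ∈ D ∧ p.2 = F p.1})
      ↔ ({0} : Set E₁) ×ˢ K
          ⊆ horizonCone (closure (convexHull ℝ {p : E₁ × E₂ | p.1 ∈ D ∧ p.2 = F p.1})) := by
  have h0K : (0:E₂) ∈ K := by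
    obtain ⟨k, hk⟩ := hne
    simpa using hcone 0 le_rfl k hk
  set G := {p : E₁ × E₂ | p.1 ∈ D ∧ p.2 = F p.1} with hGdef
  set C := closure (convexHull ℝ G) with hCdef
  set S := {p : E₁ × E₂ | p.1 ∈ D ∧ p.2 - F p.1 ∈ K} with hSdef
  constructor
  · intro heq
    rintro ⟨z, k⟩ ⟨hz, hk⟩
    simp only [Set.mem_singleton_iff] at hz
    subst hz
    obtain ⟨x₀, hx₀⟩ := hD
    refine ⟨fun n => 1/((n:ℝ)+1), fun n => (x₀, F x₀ + ((n:ℝ)+1) • k), ?_, ?_, ?_, ?_⟩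
    · intro n; positivity
    · exact tendsto_one_div_add_atTop_nhds_zero_nat
    · intro n
      rw [← heq]
      refine ⟨hx₀, by simpa using hcone ((n:ℝ)+1) (by positivity) k hk⟩
    · have h1 : ∀ n : ℕ, (1/((n:ℝ)+1)) • (((x₀, F x₀ + ((n:ℝ)+1) • k)) : E₁ × E₂)
          = ((1/((n:ℝ)+1)) • x₀, (1/((n:ℝ)+1)) • F x₀ + k) := by
        intro n
        have hne' : ((n:ℝ)+1) ≠ 0 := by positivity
        simp [Prod.smul_mk, smul_add, smul_smul, one_div, inv_mul_cancel₀ hne']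
      simp only [h1]
      have hx0lim : Filter.Tendsto (fun n : ℕ => (1/((n:ℝ)+1)) • x₀)
          Filter.atTop (nhds ((0:ℝ) • x₀)) :=
        tendsto_one_div_add_atTop_nhds_zero_nat.smul_const x₀
      have hy0lim : Filter.Tendsto (fun n : ℕ => (1/((n:ℝ)+1)) • F x₀ + k)
          Filter.atTop (nhds ((0:ℝ) • F x₀ + k)) :=
        (tendsto_one_div_add_atTop_nhds_zero_nat.smul_const (F x₀)).add tendsto_const_nhds
      simpa using hx0lim.prodMk_nhds hy0lim
  · intro hsub
    have hGS : G ⊆ S := by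
      rintro ⟨x, y⟩ ⟨hx, hy⟩
      simp only [Set.mem_setOf_eq] at hy ⊢
      exact ⟨hx, by simp [hy, h0K]⟩
    have hCS : C ⊆ S :=
      closure_minimal (convexHull_min hGS hconv) hclosed
    refine Set.Subset.antisymm ?_ hCS
    rintro ⟨x, y⟩ ⟨hx, hy⟩
    have h1 : ((x, F x) : E₁ × E₂) ∈ C :=
      subset_closure (subset_convexHull ℝ G ⟨hx, rfl⟩)
    have h2 : (((0:E₁), y - F x) : E₁ × E₂) ∈ horizonCone C :=
      hsub (Set.mk_mem_prod rfl hy)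
    have := add_horizonCone_mem isClosed_closure ((convex_convexHull ℝ G).closure) h1 h2
    simpa using this
end

section
/- Let K ⊂ E₂ be a closed convex cone and F : E₁ → E₂ ∪ {+∞} proper, K-convex and K-closed, with {0} × K ⊆ cl conv(gph F). Then the K-epigraph of F equals cl conv(gph F). -/
/-- If a proper, `K`-convex, `K`-closed `F` satisfies `{0} × K ⊆ cl conv (gph F)`, then
its `K`-epigraph equals `cl conv (gph F)`. -/
theorem kEpigraph_eq_closedConvexHull_of_subset
    {E₁ E₂ : Type*} [NormedAddCommGroup E₁] [InnerProductSpace ℝ E₁] [FiniteDimensional ℝ E₁]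
    [NormedAddCommGroup E₂] [InnerProductSpace ℝ E₂] [FiniteDimensional ℝ E₂]
    (K : Set E₂) (hne : K.Nonempty) (hKc : IsClosed K) (hK : Convex ℝ K)
    (hcone : ∀ c : ℝ, 0 ≤ c → ∀ x ∈ K, c • x ∈ K)
    (D : Set E₁) (hD : D.Nonempty) (F : E₁ → E₂)
    (hclosed : IsClosed {p : E₁ × E₂ | p.1 ∈ D ∧ p.2 - F p.1 ∈ K})
    (hconv : Convex ℝ {p : E₁ × E₂ | p.1 ∈ D ∧ p.2 - F p.1 ∈ K})
    (hsub : ({0} : Set E₁) ×ˢ K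
      ⊆ closure (convexHull ℝ {p : E₁ × E₂ | p.1 ∈ D ∧ p.2 = F p.1})) :
    {p : E₁ × E₂ | p.1 ∈ D ∧ p.2 - F p.1 ∈ K}
      = closure (convexHull ℝ {p : E₁ × E₂ | p.1 ∈ D ∧ p.2 = F p.1}) := by
  set G := {p : E₁ × E₂ | p.1 ∈ D ∧ p.2 = F p.1} with hG
  set C := closure (convexHull ℝ G) with hC
  have h0K : (0 : E₂) ∈ K := by
    obtain ⟨k, hk⟩ := hne
    simpa using hcone 0 le_rfl k hk
  have hGS : G ⊆ {p : E₁ × E₂ | p.1 ∈ D ∧ p.2 - F p.1 ∈ K} := by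
    intro p hp
    exact ⟨hp.1, by rw [hp.2]; simpa using h0K⟩
  have hCS : C ⊆ {p : E₁ × E₂ | p.1 ∈ D ∧ p.2 - F p.1 ∈ K} :=
    hclosed.closure_subset_iff.mpr (convexHull_min hGS hconv)
  refine Set.Subset.antisymm ?_ hCS
  intro p hp
  obtain ⟨hx, hk⟩ := hp
  have hCconv : Convex ℝ C := (convex_convexHull ℝ G).closure
  have hCclosed : IsClosed C := isClosed_closure
  have hGmem : (p.1, F p.1) ∈ C := subset_closure (subset_convexHull ℝ G ⟨hx, rfl⟩)
  set k := p.2 - F p.1 with hkdef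
  have key : ∀ t : ℝ, 0 ≤ t → t < 1 → ((t • p.1, t • F p.1 + k) : E₁ × E₂) ∈ C := by
    intro t ht ht1
    have h1t : (0:ℝ) < 1 - t := by linarith
    have hmem2 : ((0:E₁), (1 - t)⁻¹ • k) ∈ C :=
      hsub (Set.mk_mem_prod rfl (hcone _ (by positivity) _ hk))
    have hcomb := hCconv hGmem hmem2 ht h1t.le (by ring)
    convert hcomb using 1
    refine Prod.ext ?_ ?_
    · simp
    · simp [smul_smul, mul_inv_cancel₀ h1t.ne']
  have htend : Filter.Tendsto (fun t : ℝ => ((t • p.1, t • F p.1 + k) : E₁ × E₂))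
      (nhdsWithin 1 (Set.Iio 1)) (nhds p) := by
    have hcont : Continuous (fun t : ℝ => ((t • p.1, t • F p.1 + k) : E₁ × E₂)) := by
      fun_prop
    have := hcont.tendsto 1
    simp only [one_smul] at this
    have hval : ((p.1, F p.1 + k) : E₁ × E₂) = p := by
      refine Prod.ext rfl ?_
      simp [hkdef]
    rw [hval] at this
    exact this.mono_left nhdsWithin_le_nhds
  have hev : ∀ᶠ t : ℝ in nhdsWithin 1 (Set.Iio 1),
      ((t • p.1, t • F p.1 + k) : E₁ × E₂) ∈ C := by
    filter_upwards [eventually_mem_nhdsWithin,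
      ((eventually_gt_nhds (by norm_num : (0:ℝ) < 1)).filter_mono nhdsWithin_le_nhds)]
      with t ht1 ht0
    exact key t ht0.le ht1
  exact hCclosed.mem_of_tendsto htend hev
end

section
/- Let f : E → ℝ ∪ {+∞} be proper, lower semicontinuous and convex. Then epi f = cl conv(gph f) if and only if f admits no affine majorant on its domain (i.e., there is no affine function g with f(x) ≤ g(x) for all x ∈ dom f). -/
open scoped RealInnerProductSpace

/-- For a proper, lower semicontinuous (closed), convex function `f : E → ℝ ∪ {+∞}`,
`epi f = cl conv (gph f)` iff `f` has no affine majorant on its domain. -/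
theorem epi_eq_closedConvexHull_gph_iff_no_affine_majorant
    {E : Type*} [NormedAddCommGroup E] [InnerProductSpace ℝ E] [FiniteDimensional ℝ E]
    (f : E → EReal)
    (hproper : (∃ x, f x ≠ ⊤) ∧ ∀ x, f x ≠ ⊥)
    (hclosed : IsClosed {p : E × ℝ | f p.1 ≤ (p.2 : EReal)})
    (hconv : Convex ℝ {p : E × ℝ | f p.1 ≤ (p.2 : EReal)}) :
    {p : E × ℝ | f p.1 ≤ (p.2 : EReal)}
        = closure (convexHull ℝ {p : E × ℝ | f p.1 = (p.2 : EReal)})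
      ↔ ¬ ∃ (a : E) (β : ℝ), ∀ x, f x ≠ ⊤ → f x ≤ ((⟪a, x⟫ + β : ℝ) : EReal) := by
  obtain ⟨⟨x₀, hx₀⟩, hbot⟩ := hproper
  set gph : Set (E × ℝ) := {p : E × ℝ | f p.1 = (p.2 : EReal)} with hgph
  set epi : Set (E × ℝ) := {p : E × ℝ | f p.1 ≤ (p.2 : EReal)} with hepi
  have hreal : ∀ x : E, f x ≠ ⊤ → f x = ((f x).toReal : EReal) := fun x hx =>
    (EReal.coe_toReal hx (hbot x)).symm
  have hgph_epi : gph ⊆ epi := fun p hp => le_of_eq hp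
  have hC_epi : closure (convexHull ℝ gph) ⊆ epi :=
    closure_minimal (convexHull_min hgph_epi hconv) hclosed
  have hgph_C : gph ⊆ closure (convexHull ℝ gph) :=
    (subset_convexHull ℝ gph).trans subset_closure
  constructor
  · -- epi = cl conv gph → no affine majorant
    rintro heq ⟨a, β, hmaj⟩
    -- the closed convex halfspace below the affine majorant
    set H : Set (E × ℝ) := {p : E × ℝ | p.2 ≤ ⟪a, p.1⟫ + β} with hH
    have hHclosed : IsClosed H :=
      isClosed_le continuous_snd
        ((Continuous.inner continuous_const continuous_fst).add continuous_const)
    have hHconv : Convex ℝ H := by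
      rintro ⟨y, r⟩ hy ⟨z, q⟩ hz t s ht hs hts
      simp only [hH, Set.mem_setOf_eq, Prod.smul_mk, Prod.mk_add_mk, smul_eq_mul] at *
      rw [inner_add_right, real_inner_smul_right, real_inner_smul_right]
      have h1 : t * r ≤ t * (⟪a, y⟫ + β) := mul_le_mul_of_nonneg_left hy ht
      have h2 : s * q ≤ s * (⟪a, z⟫ + β) := mul_le_mul_of_nonneg_left hz hs
      have h3 : t * β + s * β = β := by rw [← add_mul, hts, one_mul]
      linarith
    have hsubH : closure (convexHull ℝ gph) ⊆ H := by
      refine closure_minimal (convexHull_min ?_ hHconv) hHclosed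
      rintro ⟨y, r⟩ hy
      have hyt : f y ≠ ⊤ := by rw [hy]; exact EReal.coe_ne_top r
      have := hmaj y hyt
      rw [hy] at this
      exact EReal.coe_le_coe_iff.mp this
    -- a point of epi above the halfspace
    set M : ℝ := max (f x₀).toReal (⟪a, x₀⟫ + β) + 1 with hM
    have hMem : (x₀, M) ∈ epi := by
      show f x₀ ≤ (M : EReal)
      rw [hreal x₀ hx₀]
      exact EReal.coe_le_coe_iff.mpr (by simp [hM]; nlinarith [le_max_left (f x₀).toReal (⟪a, x₀⟫ + β)])
    have : (x₀, M) ∈ H := hsubH (heq ▸ hMem)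
    simp only [hH, Set.mem_setOf_eq] at this
    have h1 : ⟪a, x₀⟫ + β ≤ max (f x₀).toReal (⟪a, x₀⟫ + β) :=
      le_max_right _ _
    simp only [hM] at this
    linarith
  · -- no affine majorant → epi = cl conv gph
    intro hno
    refine Set.Subset.antisymm ?_ hC_epi
    rintro ⟨x, α⟩ hp
    by_contra hpC
    have hCconv : Convex ℝ (closure (convexHull ℝ gph)) :=
      (convex_convexHull ℝ gph).closure
    obtain ⟨φ, u, hu1, hu2⟩ :=
      geometric_hahn_banach_closed_point hCconv isClosed_closure hpC
    -- decompose φ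
    set s : ℝ := φ (0, 1) with hs
    have hφ : ∀ (y : E) (r : ℝ), φ (y, r) = φ (y, 0) + r * s := by
      intro y r
      have h : (y, r) = (y, (0 : ℝ)) + r • ((0 : E), (1 : ℝ)) := by
        simp [Prod.ext_iff]
      rw [h, map_add, map_smul, smul_eq_mul]
    have hxdom : f x ≠ ⊤ := by
      have : f x < ⊤ := lt_of_le_of_lt hp (EReal.coe_lt_top α)
      exact this.ne
    have hfx : f x = (((f x).toReal : ℝ) : EReal) := hreal x hxdom
    have hxα : (f x).toReal ≤ α := by
      have hp' : f x ≤ (α : EReal) := hp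
      rw [hfx] at hp'; exact EReal.coe_le_coe_iff.mp hp'
    -- points of the graph are below u
    have hgphlt : ∀ y : E, f y ≠ ⊤ → φ (y, 0) + (f y).toReal * s < u := by
      intro y hy
      have : (y, (f y).toReal) ∈ gph := by
        show f y = (((f y).toReal : ℝ) : EReal)
        exact hreal y hy
      have := hu1 _ (hgph_C this)
      rwa [hφ] at this
    have hup : u < φ (x, 0) + α * s := by
      have := hu2; rwa [hφ] at this
    rcases lt_trichotomy s 0 with hsneg | hszero | hspos
    · -- s < 0 : contradiction at x itself
      have h1 := hgphlt x hxdom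
      nlinarith [mul_le_mul_of_nonpos_right hxα hsneg.le]
    · -- s = 0 : x in domain contradicts separation
      have h1 := hgphlt x hxdom
      rw [hszero] at h1 hup
      simp at h1 hup
      linarith
    · -- s > 0 : build an affine majorant
      set L : E →L[ℝ] ℝ := φ.comp (ContinuousLinearMap.inl ℝ E ℝ) with hL
      have hLy : ∀ y : E, L y = φ (y, 0) := fun y => rfl
      set a : E := (InnerProductSpace.toDual ℝ E).symm (-(s⁻¹) • L) with ha
      have hay : ∀ y : E, ⟪a, y⟫ = -(s⁻¹) * φ (y, 0) := by
        intro y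
        rw [ha, InnerProductSpace.toDual_symm_apply]
        simp [hLy]
      refine hno ⟨a, s⁻¹ * u, fun y hy => ?_⟩
      rw [hreal y hy]
      refine EReal.coe_le_coe_iff.mpr ?_
      rw [hay]
      have h1 := hgphlt y hy
      have h2 : (f y).toReal * s < u - φ (y, 0) := by linarith
      have h3 : (f y).toReal < (u - φ (y, 0)) * s⁻¹ := by
        rwa [← lt_div_iff₀ hspos, div_eq_mul_inv] at h2
      nlinarith
end

section
/- Let K ⊂ E₂ be a nonzero closed convex pointed cone and F : E₁ → E₂ ∪ {+∞} proper. If the K-epigraph of F equals the closed convex hull of gph F, then F cannot simultaneously have an affine K-majorant on dom F (an affine G with G(x) − F(x) ∈ K for all x ∈ dom F) and an affine K-minorant on dom F (an affine G with F(x) − G(x) ∈ K for all x ∈ dom F). -/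
/-- If `K` is a nonzero closed convex pointed cone and the `K`-epigraph of a proper `F`
equals the closed convex hull of `gph F`, then `F` cannot have both an affine
`K`-majorant and an affine `K`-minorant on its domain. -/
theorem no_affine_K_majorant_and_minorant
    {E₁ E₂ : Type*} [NormedAddCommGroup E₁] [InnerProductSpace ℝ E₁] [FiniteDimensional ℝ E₁]
    [NormedAddCommGroup E₂] [InnerProductSpace ℝ E₂] [FiniteDimensional ℝ E₂]
    (K : Set E₂) (hKc : IsClosed K) (hK : Convex ℝ K)
    (hcone : ∀ c : ℝ, 0 ≤ c → ∀ x ∈ K, c • x ∈ K)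
    (hpointed : K ∩ (-K) = {0}) (hKnz : K ≠ {0})
    (D : Set E₁) (hD : D.Nonempty) (F : E₁ → E₂)
    (heq : {p : E₁ × E₂ | p.1 ∈ D ∧ p.2 - F p.1 ∈ K}
      = closure (convexHull ℝ {p : E₁ × E₂ | p.1 ∈ D ∧ p.2 = F p.1})) :
    ¬ ((∃ (L : E₁ →ₗ[ℝ] E₂) (b : E₂), ∀ x ∈ D, (L x + b) - F x ∈ K) ∧
       (∃ (L : E₁ →ₗ[ℝ] E₂) (b : E₂), ∀ x ∈ D, F x - (L x + b) ∈ K)) := by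
  rintro ⟨⟨L, b, hmaj⟩, -⟩
  -- 0 ∈ K and there is a nonzero k ∈ K
  have h0K : (0 : E₂) ∈ K := by
    have : (0 : E₂) ∈ K ∩ (-K) := by rw [hpointed]; rfl
    exact this.1
  obtain ⟨k, hkK, hk0⟩ : ∃ k ∈ K, k ≠ 0 := by
    by_contra h
    push_neg at h
    apply hKnz
    ext y
    constructor
    · intro hy; simpa using h y hy
    · intro hy; simpa using hy ▸ h0K
  obtain ⟨x₀, hx₀⟩ := hD
  -- The closed convex set S above the graph
  set S : Set (E₁ × E₂) := {p : E₁ × E₂ | L p.1 + b - p.2 ∈ K} with hS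
  have hSconv : Convex ℝ S := by
    intro p hp q hq s t hs ht hst
    have : L ((s • p + t • q).1) + b - (s • p + t • q).2
        = s • (L p.1 + b - p.2) + t • (L q.1 + b - q.2) := by
      simp only [Prod.fst_add, Prod.snd_add, Prod.smul_fst, Prod.smul_snd, map_add, map_smul]
      linear_combination (norm := module) hst • ((-1:ℝ) • b)
    exact Set.mem_setOf_eq ▸ this ▸ hK hp hq hs ht hst
  have hScl : IsClosed S := by
    have hcont : Continuous fun p : E₁ × E₂ => L p.1 + b - p.2 := by
      exact ((L.continuous_of_finiteDimensional.comp continuous_fst).add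
        continuous_const).sub continuous_snd
    exact hKc.preimage hcont
  have hsub : {p : E₁ × E₂ | p.1 ∈ D ∧ p.2 = F p.1} ⊆ S := by
    rintro ⟨x, y⟩ ⟨hx, hy⟩
    simp only [hS, Set.mem_setOf_eq] at *
    rw [hy]
    exact hmaj x hx
  have hepiS : {p : E₁ × E₂ | p.1 ∈ D ∧ p.2 - F p.1 ∈ K} ⊆ S := by
    rw [heq]
    exact closure_minimal (convexHull_min hsub hSconv) hScl
  -- For each n, (x₀, F x₀ + (n+1) • k) is in the epigraph, hence in S
  have key : ∀ n : ℕ, ((n : ℝ) + 1)⁻¹ • (L x₀ + b - F x₀) - k ∈ K := by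
    intro n
    have hmem : (x₀, F x₀ + ((n : ℝ) + 1) • k) ∈
        {p : E₁ × E₂ | p.1 ∈ D ∧ p.2 - F p.1 ∈ K} := by
      refine ⟨hx₀, ?_⟩
      simp only [add_sub_cancel_left]
      exact hcone _ (by positivity) k hkK
    have hmemS := hepiS hmem
    simp only [hS, Set.mem_setOf_eq] at hmemS
    have hpos : (0:ℝ) < (n : ℝ) + 1 := by positivity
    have := hcone ((n : ℝ) + 1)⁻¹ (by positivity) _ hmemS
    have h1 : ((n : ℝ) + 1)⁻¹ * ((n : ℝ) + 1) = 1 := inv_mul_cancel₀ hpos.ne'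
    have heqv : ((n : ℝ) + 1)⁻¹ • (L x₀ + b - (F x₀ + ((n : ℝ) + 1) • k))
        = ((n : ℝ) + 1)⁻¹ • (L x₀ + b - F x₀) - k := by
      simp only [smul_sub, smul_add, smul_smul, h1, one_smul]
      abel
    rwa [heqv] at this
  -- Take the limit: -k ∈ K
  have hlim : Filter.Tendsto (fun n : ℕ => ((n : ℝ) + 1)⁻¹ • (L x₀ + b - F x₀) - k)
      Filter.atTop (nhds (-k)) := by
    have h1 : Filter.Tendsto (fun n : ℕ => ((n : ℝ) + 1)⁻¹) Filter.atTop (nhds 0) := by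
      simpa [one_div] using tendsto_one_div_add_atTop_nhds_zero_nat (𝕜 := ℝ)
    have h2 : Filter.Tendsto (fun n : ℕ => ((n : ℝ) + 1)⁻¹ • (L x₀ + b - F x₀))
        Filter.atTop (nhds 0) := by
      simpa using h1.smul_const (L x₀ + b - F x₀)
    simpa using h2.sub_const k
  have hnk : -k ∈ K := hKc.mem_of_tendsto hlim (Filter.Eventually.of_forall key)
  have : k ∈ K ∩ (-K) := ⟨hkK, by simpa using hnk⟩
  rw [hpointed] at this
  exact hk0 this
end

section
/- Let K = {x ∈ E₂ : ⟨b_i, x⟩ ≥ 0, i = 1,…,m} where b₁,…,b_m ∈ E₂ are linearly independent, and let F : E₁ → E₂ ∪ {+∞} be proper and K-convex. Then F has an affine K-minorant on E₁, i.e., there exist a linear map L : E₁ → E₂ and w ∈ E₂ with F(x) − (L(x) + w) ∈ K for all x ∈ dom F. -/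
open scoped RealInnerProductSpace
open Filter Topology Set

/-- A convex function on a set with an interior point has an affine minorant. -/
private lemma affine_minorant_of_mem_interior {E : Type*} [NormedAddCommGroup E]
    [NormedSpace ℝ E] [FiniteDimensional ℝ E] {D : Set E} {f : E → ℝ}
    (hf : ConvexOn ℝ D f) {x₀ : E} (hx₀ : x₀ ∈ interior D) :
    ∃ (a : E →ₗ[ℝ] ℝ) (c : ℝ), ∀ x ∈ D, a x + c ≤ f x := by
  have hfc : ContinuousOn f (interior D) := hf.continuousOn_interior
  set S : Set (E × ℝ) := {p | p.1 ∈ interior D ∧ f p.1 < p.2} with hS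
  have hSconv : Convex ℝ S := by
    rintro p ⟨hp1, hp2⟩ q ⟨hq1, hq2⟩ s t hs ht hst
    refine ⟨hf.1.interior hp1 hq1 hs ht hst, ?_⟩
    have h1 : f (s • p.1 + t • q.1) ≤ s * f p.1 + t * f q.1 := by
      simpa [smul_eq_mul] using
        (hf.subset interior_subset hf.1.interior).2 hp1 hq1 hs ht hst
    have h2 : s * f p.1 + t * f q.1 < s * p.2 + t * q.2 := by
      obtain rfl | hs' := hs.eq_or_lt
      · have ht1 : t = 1 := by linarith
        simpa [ht1] using hq2
      · have h3 : s * f p.1 < s * p.2 := mul_lt_mul_of_pos_left hp2 hs'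
        have h4 : t * f q.1 ≤ t * q.2 := mul_le_mul_of_nonneg_left hq2.le ht
        linarith
    exact h1.trans_lt h2
  have hSopen : IsOpen S := by
    have hSeq : S = ((interior D) ×ˢ (univ : Set ℝ)) ∩
        ((fun p : E × ℝ => p.2 - f p.1) ⁻¹' Ioi 0) := by
      ext p
      simp only [hS, Set.mem_setOf_eq, Set.mem_inter_iff, Set.mem_prod, Set.mem_univ,
        and_true, Set.mem_preimage, Set.mem_Ioi, sub_pos]
    rw [hSeq]
    refine ContinuousOn.isOpen_inter_preimage ?_ (isOpen_interior.prod isOpen_univ) isOpen_Ioi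
    exact continuous_snd.continuousOn.sub
      (hfc.comp continuous_fst.continuousOn (fun p hp => hp.1))
  have hp₀ : ((x₀, f x₀ - 1) : E × ℝ) ∉ S := by
    rintro ⟨-, h⟩
    simp only at h
    linarith
  obtain ⟨φ, hφ⟩ := geometric_hahn_banach_open_point hSconv hSopen hp₀
  set α : ℝ := φ ((0 : E), (1 : ℝ)) with hαdef
  have hsplit : ∀ (x : E) (t : ℝ), φ (x, t) = φ (x, 0) + t * α := by
    intro x t
    have : ((x, t) : E × ℝ) = (x, 0) + t • ((0 : E), (1 : ℝ)) := by
      simp [Prod.ext_iff]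
    rw [this, map_add, map_smul, smul_eq_mul]
  set Cst : ℝ := φ (x₀, f x₀ - 1) with hCst
  have hCexp : Cst = φ (x₀, 0) + (f x₀ - 1) * α := hCst.trans (hsplit x₀ (f x₀ - 1))
  have hα : α < 0 := by
    have h1 := hφ (x₀, f x₀ + 1) ⟨hx₀, by simp⟩
    rw [hsplit x₀ (f x₀ + 1), hCexp] at h1
    ring_nf at h1
    linarith
  have key : ∀ x ∈ interior D, φ (x, 0) + f x * α ≤ Cst := by
    intro x hx
    have heps : ∀ ε > (0 : ℝ), φ (x, 0) + (f x + ε) * α < Cst := by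
      intro ε hε
      have h := hφ (x, f x + ε) ⟨hx, by show f x < f x + ε; linarith⟩
      rw [hsplit x (f x + ε)] at h
      exact h
    refine le_of_forall_pos_le_add (fun ε hε => ?_)
    have hδ : 0 < ε / (-α) := div_pos hε (by linarith)
    have h1 := heps _ hδ
    have h2 : (f x + ε / (-α)) * α = f x * α - ε := by
      have hh : ε / (-α) * α = -ε := by
        rw [div_neg, neg_mul, div_mul_cancel₀ _ hα.ne]
      rw [add_mul, hh]
      ring
    rw [h2] at h1
    linarith
  -- build the affine minorant
  set β : ℝ := -α with hβ
  have hβpos : 0 < β := by rw [hβ]; linarith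
  set ψ : E →ₗ[ℝ] ℝ := (φ.comp (ContinuousLinearMap.inl ℝ E ℝ)).toLinearMap with hψ
  have hψval : ∀ x : E, ψ x = φ (x, 0) := fun x => rfl
  refine ⟨β⁻¹ • ψ, β⁻¹ * (-Cst), ?_⟩
  have hint : ∀ y ∈ interior D, (β⁻¹ • ψ) y + β⁻¹ * (-Cst) ≤ f y := by
    intro y hy
    have h1 := key y hy
    have h2 : β⁻¹ * (φ (y, 0) + f y * α) ≤ β⁻¹ * Cst :=
      mul_le_mul_of_nonneg_left h1 (inv_pos.2 hβpos).le
    have h3 : β⁻¹ * (φ (y, 0) + f y * α) = β⁻¹ * φ (y, 0) - f y := by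
      have : α = -β := by rw [hβ]; ring
      rw [this]
      field_simp
      ring
    rw [h3] at h2
    simp only [LinearMap.smul_apply, smul_eq_mul, hψval]
    linarith
  intro x hxD
  have hseg : ∀ s : ℝ, s ∈ Ico (0:ℝ) 1 → (1 - s) • x₀ + s • x ∈ interior D := fun s hs =>
    hf.1.combo_interior_self_mem_interior hx₀ hxD (by linarith [hs.2]) hs.1 (by ring)
  have hle : ∀ s ∈ Ico (0:ℝ) 1,
      0 ≤ (1 - s) * f x₀ + s * f x - ((1 - s) * (ψ x₀ * β⁻¹) + s * (ψ x * β⁻¹) + β⁻¹ * (-Cst)) := by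
    intro s hs
    have h1 := hint _ (hseg s hs)
    have h2 := hf.2 (interior_subset hx₀) hxD
      (by linarith [hs.2] : (0:ℝ) ≤ 1 - s) hs.1 (by ring)
    simp only [LinearMap.smul_apply, smul_eq_mul, map_add, map_smul] at h1
    simp only [smul_eq_mul] at h2
    nlinarith [h1, h2]
  have hlim : Tendsto (fun s : ℝ => (1 - s) * f x₀ + s * f x -
      ((1 - s) * (ψ x₀ * β⁻¹) + s * (ψ x * β⁻¹) + β⁻¹ * (-Cst))) (𝓝[<] 1)
      (𝓝 (f x - (ψ x * β⁻¹ + β⁻¹ * (-Cst)))) := by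
    have hcont : Continuous (fun s : ℝ => (1 - s) * f x₀ + s * f x -
        ((1 - s) * (ψ x₀ * β⁻¹) + s * (ψ x * β⁻¹) + β⁻¹ * (-Cst))) := by fun_prop
    have := hcont.tendsto 1
    have heq : (1 - (1:ℝ)) * f x₀ + 1 * f x -
        ((1 - (1:ℝ)) * (ψ x₀ * β⁻¹) + 1 * (ψ x * β⁻¹) + β⁻¹ * (-Cst))
        = f x - (ψ x * β⁻¹ + β⁻¹ * (-Cst)) := by ring
    rw [heq] at this
    exact this.mono_left nhdsWithin_le_nhds
  have hev : ∀ᶠ s in (𝓝[<] (1:ℝ)), 0 ≤ (1 - s) * f x₀ + s * f x -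
      ((1 - s) * (ψ x₀ * β⁻¹) + s * (ψ x * β⁻¹) + β⁻¹ * (-Cst)) := by
    filter_upwards [Ico_mem_nhdsLT_of_mem (Set.mem_Ioc.2 ⟨zero_lt_one, le_refl 1⟩)] with s hs
    exact hle s hs
  have hfin := ge_of_tendsto hlim hev
  simp only [LinearMap.smul_apply, smul_eq_mul]
  linarith

/-- Any convex function on a nonempty convex set has an affine minorant. -/
private lemma exists_affine_minorant {E : Type*} [NormedAddCommGroup E]
    [InnerProductSpace ℝ E] [FiniteDimensional ℝ E] {D : Set E} {f : E → ℝ}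
    (hf : ConvexOn ℝ D f) (hD : D.Nonempty) :
    ∃ (a : E →ₗ[ℝ] ℝ) (c : ℝ), ∀ x ∈ D, a x + c ≤ f x := by
  obtain ⟨x₀, hx₀⟩ := hD
  set V : Submodule ℝ E := Submodule.span ℝ ((fun y => y - x₀) '' D) with hV
  set D' : Set V := {v : V | x₀ + (v : E) ∈ D} with hD'
  have hkey : ∀ (u v : V) (s t : ℝ), s + t = 1 →
      x₀ + ((s • u + t • v : V) : E) = s • (x₀ + (u : E)) + t • (x₀ + (v : E)) := by
    intro u v s t hst
    push_cast
    match_scalars <;> linarith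
  have hD'conv : Convex ℝ D' := by
    intro u hu v hv s t hs ht hst
    show x₀ + ((s • u + t • v : V) : E) ∈ D
    rw [hkey u v s t hst]
    exact hf.1 hu hv hs ht hst
  have hf' : ConvexOn ℝ D' (fun v : V => f (x₀ + (v : E))) := by
    refine ⟨hD'conv, fun u hu v hv s t hs ht hst => ?_⟩
    show f (x₀ + ((s • u + t • v : V) : E)) ≤ _
    rw [hkey u v s t hst]
    exact hf.2 hu hv hs ht hst
  have h0 : (0 : V) ∈ D' := by
    show x₀ + ((0 : V) : E) ∈ D
    simpa using hx₀
  have hspan : Submodule.span ℝ D' = (⊤ : Submodule ℝ V) := by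
    apply Submodule.map_injective_of_injective V.injective_subtype
    rw [Submodule.map_span, Submodule.map_top, Submodule.range_subtype]
    apply le_antisymm
    · rw [Submodule.span_le]
      rintro _ ⟨⟨v, hv⟩, -, rfl⟩
      exact hv
    · have hsub : ((fun y => y - x₀) '' D) ⊆
          (Submodule.span ℝ (⇑V.subtype '' D') : Set E) := by
        rintro _ ⟨y, hy, rfl⟩
        have hyV : y - x₀ ∈ V := Submodule.subset_span ⟨y, hy, rfl⟩
        have hyD' : (⟨y - x₀, hyV⟩ : V) ∈ D' := by
          show x₀ + (y - x₀) ∈ D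
          simpa using hy
        exact Submodule.subset_span ⟨⟨y - x₀, hyV⟩, hyD', rfl⟩
      calc V = Submodule.span ℝ ((fun y => y - x₀) '' D) := hV
        _ ≤ Submodule.span ℝ (⇑V.subtype '' D') := Submodule.span_le.2 hsub
  have haff : affineSpan ℝ D' = ⊤ := by
    rw [AffineSubspace.affineSpan_eq_top_iff_vectorSpan_eq_top_of_nonempty ℝ ↥V ↥V ⟨0, h0⟩]
    rw [vectorSpan_eq_span_vsub_set_right ℝ h0]
    simpa [vsub_eq_sub, sub_zero, Set.image_id] using hspan
  obtain ⟨x₁, hx₁⟩ := (hD'conv.interior_nonempty_iff_affineSpan_eq_top).2 haff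
  obtain ⟨a', c, hac⟩ := affine_minorant_of_mem_interior hf' hx₁
  have hproj : ∀ v : V, (Submodule.orthogonalProjectionOnto V) (v : E) = v := fun v =>
    Submodule.orthogonalProjectionOnto_mem_subspace_eq_self v
  refine ⟨a' ∘ₗ (Submodule.orthogonalProjectionOnto V).toLinearMap,
    c - a' ((Submodule.orthogonalProjectionOnto V) x₀), fun x hx => ?_⟩
  have hv : x - x₀ ∈ V := Submodule.subset_span ⟨x, hx, rfl⟩
  have hvD : (⟨x - x₀, hv⟩ : V) ∈ D' := by
    show x₀ + (x - x₀) ∈ D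
    simpa using hx
  have h1 := hac _ hvD
  have h2 : x₀ + ((⟨x - x₀, hv⟩ : V) : E) = x := by simp
  rw [h2] at h1
  have hsplit : (Submodule.orthogonalProjectionOnto V) x
      = (Submodule.orthogonalProjectionOnto V) x₀ + (⟨x - x₀, hv⟩ : V) := by
    have h3 : x₀ + (x - x₀) = x := by abel
    calc (Submodule.orthogonalProjectionOnto V) x
        = (Submodule.orthogonalProjectionOnto V) (x₀ + (x - x₀)) := by rw [h3]
      _ = (Submodule.orthogonalProjectionOnto V) x₀ + (Submodule.orthogonalProjectionOnto V) (x - x₀) := map_add _ _ _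
      _ = (Submodule.orthogonalProjectionOnto V) x₀ + (⟨x - x₀, hv⟩ : V) := by
          congr 1
          exact hproj ⟨x - x₀, hv⟩
  simp only [LinearMap.comp_apply, ContinuousLinearMap.coe_coe]
  rw [hsplit, map_add]
  linarith

/-- Dual vectors to a linearly independent family in an inner product space. -/
private lemma exists_dual_vectors {E : Type*} [NormedAddCommGroup E]
    [InnerProductSpace ℝ E] [FiniteDimensional ℝ E]
    {m : ℕ} {b : Fin m → E} (hb : LinearIndependent ℝ b) :
    ∃ d : Fin m → E, ∀ i j, ⟪b i, d j⟫ = if i = j then 1 else 0 := by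
  set T : E →ₗ[ℝ] (Fin m → ℝ) :=
    LinearMap.pi (fun i => ((innerSL ℝ (b i)).toLinearMap)) with hT
  have hTval : ∀ (x : E) (i : Fin m), T x i = ⟪b i, x⟫ := fun x i => rfl
  have hsurj : Function.Surjective T := by
    rw [← LinearMap.range_eq_top]
    by_contra h
    obtain ⟨g, hg0, hgker⟩ := Submodule.exists_dual_map_eq_bot_of_lt_top
      (lt_top_iff_ne_top.2 h) inferInstance
    have hg : ∀ x : E, g (T x) = 0 := by
      intro x
      have hmem : g (T x) ∈ (LinearMap.range T).map g := ⟨T x, ⟨x, rfl⟩, rfl⟩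
      rw [hgker] at hmem
      simpa using hmem
    set cvec : Fin m → ℝ := fun i => g (fun j => if i = j then 1 else 0) with hcvec
    have hgv : ∀ v : Fin m → ℝ, g v = ∑ i, v i * cvec i := by
      intro v
      conv_lhs => rw [pi_eq_sum_univ v]
      rw [map_sum]
      refine Finset.sum_congr rfl (fun i _ => ?_)
      rw [map_smul, smul_eq_mul]
    have hzero : ∀ x : E, ⟪∑ i, cvec i • b i, x⟫ = 0 := by
      intro x
      rw [sum_inner]
      have h1 := hg x
      rw [hgv] at h1
      simp only [real_inner_smul_left]
      calc ∑ i, cvec i * ⟪b i, x⟫ = ∑ i, (T x) i * cvec i := by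
            refine Finset.sum_congr rfl (fun i _ => ?_)
            rw [hTval]; ring
        _ = 0 := h1
    have hsum0 : ∑ i, cvec i • b i = 0 := by
      have := hzero (∑ i, cvec i • b i)
      exact inner_self_eq_zero.mp this
    have hc0 : ∀ i, cvec i = 0 := Fintype.linearIndependent_iff.mp hb _ hsum0
    apply hg0
    apply LinearMap.ext
    intro v
    rw [hgv]
    simp [hc0]
  choose d hdv using fun j => hsurj (Pi.single j 1)
  refine ⟨d, fun i j => ?_⟩
  have := congrFun (hdv j) i
  rw [hTval] at this
  rw [this, Pi.single_apply]

/-- If `K = {x : ⟪b i, x⟫ ≥ 0 ∀ i}` for linearly independent `b₁, …, b_m` and `F` is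
proper and `K`-convex, then `F` has an affine `K`-minorant. -/
theorem exists_affine_K_minorant_polyhedral
    {E₁ E₂ : Type*} [NormedAddCommGroup E₁] [InnerProductSpace ℝ E₁] [FiniteDimensional ℝ E₁]
    [NormedAddCommGroup E₂] [InnerProductSpace ℝ E₂] [FiniteDimensional ℝ E₂]
    {m : ℕ} (b : Fin m → E₂) (hb : LinearIndependent ℝ b)
    (K : Set E₂) (hKdef : K = {x : E₂ | ∀ i, 0 ≤ ⟪b i, x⟫})
    (D : Set E₁) (hD : D.Nonempty) (F : E₁ → E₂)
    (hconv : Convex ℝ {p : E₁ × E₂ | p.1 ∈ D ∧ p.2 - F p.1 ∈ K}) :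
    ∃ (L : E₁ →ₗ[ℝ] E₂) (w : E₂), ∀ x ∈ D, F x - (L x + w) ∈ K := by
  subst hKdef
  have hmem : ∀ x ∈ D, (x, F x) ∈ {p : E₁ × E₂ | p.1 ∈ D ∧
      p.2 - F p.1 ∈ {y : E₂ | ∀ i, 0 ≤ ⟪b i, y⟫}} := by
    intro x hx
    refine ⟨hx, fun i => ?_⟩
    simp
  have hDconv : Convex ℝ D := by
    intro x hx y hy s t hs ht hst
    exact (hconv (hmem x hx) (hmem y hy) hs ht hst).1
  have hfconv : ∀ i, ConvexOn ℝ D (fun x => ⟪b i, F x⟫) := by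
    intro i
    refine ⟨hDconv, fun x hx y hy s t hs ht hst => ?_⟩
    have hm := hconv (hmem x hx) (hmem y hy) hs ht hst
    have h2 : (0:ℝ) ≤ ⟪b i, (s • F x + t • F y) - F (s • x + t • y)⟫ := hm.2 i
    rw [inner_sub_right, inner_add_right, real_inner_smul_right, real_inner_smul_right] at h2
    simp only [smul_eq_mul]
    linarith
  have hmin : ∀ i : Fin m, ∃ (a : E₁ →ₗ[ℝ] ℝ) (c : ℝ),
      ∀ x ∈ D, a x + c ≤ ⟪b i, F x⟫ :=
    fun i => exists_affine_minorant (hfconv i) hD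
  choose a c hac using hmin
  obtain ⟨d, hd⟩ := exists_dual_vectors hb
  refine ⟨∑ j, (a j).smulRight (d j), ∑ j, c j • d j, fun x hx => ?_⟩
  intro i
  have hsum1 : ⟪b i, (∑ j, (a j).smulRight (d j)) x⟫ = a i x := by
    rw [LinearMap.sum_apply, inner_sum]
    simp only [LinearMap.smulRight_apply, real_inner_smul_right, hd]
    simp [Finset.sum_ite_eq, mul_ite]
  have hsum2 : ⟪b i, ∑ j, c j • d j⟫ = c i := by
    rw [inner_sum]
    simp only [real_inner_smul_right, hd]
    simp [Finset.sum_ite_eq, mul_ite]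
  show (0:ℝ) ≤ ⟪b i, F x - ((∑ j, (a j).smulRight (d j)) x + ∑ j, c j • d j)⟫
  rw [inner_sub_right, inner_add_right, hsum1, hsum2]
  linarith [hac i x hx]
end
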